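/- arXiv:2506.02818 — 4 statements merged into one kernel-verified Lean document; each statement's English description precedes it below -/
import Mathlib

section
/- The orthogonal Procrustes problem min_{QᵀQ=I} ‖QA − B‖_F is solved by Q = UVᵀ, where BAᵀ = UΣVᵀ is a singular value decomposition of BAᵀ; i.e., for any orthogonal Q', ‖UVᵀ A − B‖_F ≤ ‖Q'A − B‖_F. -/
open Matrix

noncomputable def frob {m n : Type*} [Fintype m] [Fintype n] (M : Matrix m n ℝ) : ℝ :=
  Real.sqrt (∑ i, ∑ j, (M i j) ^ 2)

lemma sumsq_eq_trace {k l : Type*} [Fintype k] [Fintype l] (M : Matrix k l ℝ) :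
    ∑ i, ∑ j, (M i j) ^ 2 = trace (Mᵀ * M) := by
  simp only [trace, Matrix.diag, Matrix.mul_apply, Matrix.transpose_apply, sq]
  rw [Finset.sum_comm]

theorem orthogonal_procrustes {n m : ℕ}
    (A B : Matrix (Fin n) (Fin m) ℝ)
    (U V : Matrix (Fin n) (Fin n) ℝ) (S : Matrix (Fin n) (Fin n) ℝ)
    (hU : Uᵀ * U = 1) (hV : Vᵀ * V = 1)
    (hSdiag : ∀ i j, i ≠ j → S i j = 0) (hSnonneg : ∀ i, 0 ≤ S i i)
    (hSVD : B * Aᵀ = U * S * Vᵀ) :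
    ∀ Q' : Matrix (Fin n) (Fin n) ℝ, Q'ᵀ * Q' = 1 →
      frob ((U * Vᵀ) * A - B) ≤ frob (Q' * A - B) := by
  intro Q' hQ'
  have hVV : V * Vᵀ = 1 := mul_eq_one_comm.mp hV
  have hUU : U * Uᵀ = 1 := mul_eq_one_comm.mp hU
  -- key expansion: for orthogonal Q,
  have key : ∀ Q : Matrix (Fin n) (Fin n) ℝ, Qᵀ * Q = 1 →
      ∑ i, ∑ j, ((Q * A - B) i j) ^ 2
        = trace (Aᵀ * A) + trace (Bᵀ * B) - 2 * trace ((Vᵀ * Qᵀ * U) * S) := by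
    intro Q hQ
    rw [sumsq_eq_trace]
    have h1 : (Q * A - B)ᵀ * (Q * A - B)
        = Aᵀ * A - Aᵀ * Qᵀ * B - Bᵀ * (Q * A) + Bᵀ * B := by
      have hAA : Aᵀ * Qᵀ * (Q * A) = Aᵀ * A := by
        rw [Matrix.mul_assoc, ← Matrix.mul_assoc Qᵀ, hQ, Matrix.one_mul]
      rw [Matrix.transpose_sub, Matrix.transpose_mul, Matrix.sub_mul,
        Matrix.mul_sub, Matrix.mul_sub, hAA]
      abel
    rw [h1]
    have hBQA : trace (Bᵀ * (Q * A)) = trace (Aᵀ * Qᵀ * B) := by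
      rw [← Matrix.trace_transpose (Aᵀ * Qᵀ * B)]
      congr 1
      rw [Matrix.transpose_mul, Matrix.transpose_mul]
      simp [Matrix.mul_assoc]
    have hcyc : trace (Aᵀ * Qᵀ * B) = trace ((Vᵀ * Qᵀ * U) * S) := by
      rw [Matrix.trace_mul_cycle, hSVD, Matrix.trace_mul_cycle,
        Matrix.trace_mul_cycle]
      congr 1
      simp [Matrix.mul_assoc]
    rw [Matrix.trace_add, Matrix.trace_sub, Matrix.trace_sub, hBQA, hcyc]
    ring
  -- diagonal trace bound
  have bound : ∀ W : Matrix (Fin n) (Fin n) ℝ, Wᵀ * W = 1 →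
      trace (W * S) ≤ trace S := by
    intro W hW
    have hdiag : ∀ i, (W * S) i i = W i i * S i i := by
      intro i
      rw [Matrix.mul_apply]
      rw [Finset.sum_eq_single i]
      · intro j _ hj
        rw [hSdiag j i hj, mul_zero]
      · intro h; exact absurd (Finset.mem_univ i) h
    have hWle : ∀ i, W i i ≤ 1 := by
      intro i
      have h1 : ∑ j, (W j i) ^ 2 = 1 := by
        have := congrFun (congrFun hW i) i
        simpa [Matrix.mul_apply, Matrix.one_apply, sq] using this
      have h2 : (W i i) ^ 2 ≤ 1 := by
        rw [← h1]
        exact Finset.single_le_sum (f := fun j => (W j i) ^ 2) (fun j _ => sq_nonneg _) (Finset.mem_univ i)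
      nlinarith [sq_nonneg (W i i - 1)]
    unfold trace
    simp only [Matrix.diag]
    rw [show (∑ i, (W * S) i i) = ∑ i, W i i * S i i from Finset.sum_congr rfl
      (fun i _ => hdiag i)]
    apply Finset.sum_le_sum
    intro i _
    calc W i i * S i i ≤ 1 * S i i := mul_le_mul_of_nonneg_right (hWle i) (hSnonneg i)
      _ = S i i := one_mul _
  have hQ0 : (U * Vᵀ)ᵀ * (U * Vᵀ) = 1 := by
    rw [Matrix.transpose_mul, Matrix.transpose_transpose]
    calc V * Uᵀ * (U * Vᵀ) = V * (Uᵀ * U) * Vᵀ := by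
          rw [Matrix.mul_assoc, Matrix.mul_assoc, Matrix.mul_assoc]
      _ = 1 := by rw [hU, Matrix.mul_one, hVV]
  have hW0 : Vᵀ * (U * Vᵀ)ᵀ * U = 1 := by
    rw [Matrix.transpose_mul, Matrix.transpose_transpose]
    calc Vᵀ * (V * Uᵀ) * U = (Vᵀ * V) * (Uᵀ * U) := by
          rw [Matrix.mul_assoc, Matrix.mul_assoc, Matrix.mul_assoc]
      _ = 1 := by rw [hU, hV, Matrix.mul_one]
  have hWQ' : (Vᵀ * Q'ᵀ * U)ᵀ * (Vᵀ * Q'ᵀ * U) = 1 := by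
    have hQQ' : Q' * Q'ᵀ = 1 := mul_eq_one_comm.mp hQ'
    rw [Matrix.transpose_mul, Matrix.transpose_mul, Matrix.transpose_transpose,
      Matrix.transpose_transpose]
    calc Uᵀ * (Q' * Vᵀᵀ) * (Vᵀ * Q'ᵀ * U)
        = Uᵀ * (Q' * ((V * Vᵀ) * (Q'ᵀ * U))) := by
          rw [Matrix.transpose_transpose]
          simp [Matrix.mul_assoc]
      _ = 1 := by rw [hVV, Matrix.one_mul, ← Matrix.mul_assoc Q', hQQ',
            Matrix.one_mul, hU]
  have hsumle : ∑ i, ∑ j, (((U * Vᵀ) * A - B) i j) ^ 2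
      ≤ ∑ i, ∑ j, ((Q' * A - B) i j) ^ 2 := by
    rw [key _ hQ0, key _ hQ']
    have h0 : trace ((Vᵀ * (U * Vᵀ)ᵀ * U) * S) = trace S := by rw [hW0, Matrix.one_mul]
    have h1 : trace ((Vᵀ * Q'ᵀ * U) * S) ≤ trace S := bound _ hWQ'
    linarith [h0, h1]
  exact Real.sqrt_le_sqrt hsumle
end

section
/- An orthogonal matrix Q maximizes tr(QᵀM) over all orthogonal matrices if and only if QᵀM is symmetric positive semidefinite; in particular Q = UVᵀ with M = UΣVᵀ achieves the maximum tr(Σ). -/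
open Matrix

private lemma orth_mul' {n : ℕ} {A B : Matrix (Fin n) (Fin n) ℝ}
    (hA : Aᵀ * A = 1) (hB : Bᵀ * B = 1) : (A * B)ᵀ * (A * B) = 1 := by
  rw [Matrix.transpose_mul]
  have h1 : Bᵀ * Aᵀ * (A * B) = Bᵀ * (Aᵀ * A) * B := by simp only [Matrix.mul_assoc]
  rw [h1, hA, Matrix.mul_one, hB]

private lemma orth_transpose' {n : ℕ} {A : Matrix (Fin n) (Fin n) ℝ}
    (hA : Aᵀ * A = 1) : Aᵀᵀ * Aᵀ = 1 := by
  rw [Matrix.transpose_transpose]; exact mul_eq_one_comm.mp hA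

private lemma psd_diag_nonneg' {n : ℕ} {A : Matrix (Fin n) (Fin n) ℝ}
    (hA : A.PosSemidef) (i : Fin n) : 0 ≤ A i i := by
  exact hA.diag_nonneg

open scoped MatrixOrder in
/-- Key lemma: for orthogonal `R` and PSD `A`, `tr(R*A) ≤ tr(A)`. -/
private lemma trace_orth_mul_psd' {n : ℕ} (R A : Matrix (Fin n) (Fin n) ℝ)
    (hR : Rᵀ * R = 1) (hA : A.PosSemidef) : (R * A).trace ≤ A.trace := by
  obtain ⟨B, hBH, hB2⟩ : ∃ B : Matrix (Fin n) (Fin n) ℝ, Bᵀ = B ∧ B * B = A := by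
    refine ⟨CFC.sqrt A, ?_, CFC.sqrt_mul_sqrt_self A hA.nonneg⟩
    have h := (CFC.sqrt_nonneg A).posSemidef.1
    conv_rhs => rw [← h]
    ext i j; simp [Matrix.conjTranspose_apply]
  have key : ∀ i, (B * (R * B)) i i ≤ A i i := by
    intro i
    have h1 : ∑ j, (B i j) ^ 2 = A i i := by
      have : ∀ j, (B i j) ^ 2 = B i j * B j i := by
        intro j; rw [sq]
        congr 1
        calc B i j = Bᵀ j i := rfl
          _ = B j i := by rw [hBH]
      calc ∑ j, (B i j) ^ 2 = ∑ j, B i j * B j i := Finset.sum_congr rfl fun j _ => this j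
        _ = (B * B) i i := (Matrix.mul_apply).symm
        _ = A i i := by rw [hB2]
    have h2 : ∑ j, ((R * B) j i) ^ 2 = A i i := by
      have hT : (R * B)ᵀ * (R * B) = A := by
        rw [Matrix.transpose_mul, hBH]
        have : B * Rᵀ * (R * B) = B * (Rᵀ * R) * B := by simp only [Matrix.mul_assoc]
        rw [this, hR, Matrix.mul_one, hB2]
      calc ∑ j, ((R * B) j i) ^ 2 = ∑ j, (R * B)ᵀ i j * (R * B) j i := by
            refine Finset.sum_congr rfl fun j _ => ?_
            rw [sq, Matrix.transpose_apply]
        _ = ((R * B)ᵀ * (R * B)) i i := (Matrix.mul_apply).symm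
        _ = A i i := by rw [hT]
    have hcs := Finset.sum_mul_sq_le_sq_mul_sq Finset.univ (fun j => B i j) (fun j => (R * B) j i)
    have hexp : (B * (R * B)) i i = ∑ j, B i j * (R * B) j i := Matrix.mul_apply
    have hAi : 0 ≤ A i i := psd_diag_nonneg' hA i
    rw [hexp]
    nlinarith [hcs, h1, h2, hAi, sq_nonneg ((∑ j, B i j * (R * B) j i) - A i i)]
  have htr : R * A = R * B * B := by rw [Matrix.mul_assoc, hB2]
  calc (R * A).trace = (B * (R * B)).trace := by rw [htr, Matrix.trace_mul_comm]
    _ = ∑ i, (B * (R * B)) i i := rfl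
    _ ≤ ∑ i, A i i := Finset.sum_le_sum fun i _ => key i
    _ = A.trace := rfl

/-- Equality case: orthogonal `W`, diagonal nonneg `S`, `tr(W*S) = tr(S)` implies `W*S = S`. -/
private lemma orth_trace_eq_imp' {n : ℕ} (W S : Matrix (Fin n) (Fin n) ℝ)
    (hW : Wᵀ * W = 1)
    (hSdiag : ∀ i j, i ≠ j → S i j = 0) (hSnonneg : ∀ i, 0 ≤ S i i)
    (htr : (W * S).trace = S.trace) : W * S = S := by
  have hWW : W * Wᵀ = 1 := mul_eq_one_comm.mp hW
  have row : ∀ i, ∑ j, (W i j) ^ 2 = 1 := by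
    intro i
    have h := congrArg (fun X : Matrix (Fin n) (Fin n) ℝ => X i i) hWW
    simpa [Matrix.mul_apply, Matrix.transpose_apply, sq] using h
  have col : ∀ i, ∑ j, (W j i) ^ 2 = 1 := by
    intro i
    have h := congrArg (fun X : Matrix (Fin n) (Fin n) ℝ => X i i) hW
    simpa [Matrix.mul_apply, Matrix.transpose_apply, sq] using h
  have hdiagWS : ∀ i, (W * S) i i = W i i * S i i := by
    intro i
    rw [Matrix.mul_apply]
    exact Finset.sum_eq_single i (fun j _ hj => by rw [hSdiag j i hj, mul_zero]) (by simp)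
  have hterm : ∀ i, W i i * S i i ≤ S i i := by
    intro i
    have h1 : (W i i) ^ 2 ≤ 1 := by
      calc (W i i) ^ 2 ≤ ∑ j, (W i j) ^ 2 :=
            Finset.single_le_sum (f := fun j => (W i j) ^ 2) (fun j _ => sq_nonneg _) (Finset.mem_univ i)
        _ = 1 := row i
    have hle : W i i ≤ 1 := by nlinarith [sq_nonneg (W i i - 1)]
    exact mul_le_of_le_one_left (hSnonneg i) hle
  have hsum : ∑ i, W i i * S i i = ∑ i, S i i := by
    have h1 : (W * S).trace = ∑ i, W i i * S i i := by
      simp only [Matrix.trace, Matrix.diag]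
      exact Finset.sum_congr rfl fun i _ => hdiagWS i
    rw [h1] at htr
    simpa [Matrix.trace, Matrix.diag] using htr
  have hpoint : ∀ i, W i i * S i i = S i i := by
    have hz : ∑ i, (S i i - W i i * S i i) = 0 := by
      rw [Finset.sum_sub_distrib, hsum, sub_self]
    intro i
    have := (Finset.sum_eq_zero_iff_of_nonneg
      (fun j _ => sub_nonneg.mpr (hterm j))).mp hz i (Finset.mem_univ i)
    linarith
  ext i j
  rw [Matrix.mul_apply,
    Finset.sum_eq_single j (fun k _ hk => by rw [hSdiag k j hk, mul_zero]) (by simp)]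
  by_cases hij : i = j
  · subst hij; exact hpoint i
  · rcases eq_or_lt_of_le (hSnonneg j) with h0 | hpos
    · rw [← h0, mul_zero, hSdiag i j hij]
    · have hW1 : W j j = 1 := by
        have h := hpoint j
        have := mul_right_cancel₀ (ne_of_gt hpos) (by rw [one_mul]; exact h : W j j * S j j = 1 * S j j)
        exact this
      have hsplit : (W j j) ^ 2 + ∑ k ∈ Finset.univ.erase j, (W k j) ^ 2 = 1 := by
        rw [Finset.add_sum_erase Finset.univ (fun k => (W k j) ^ 2) (Finset.mem_univ j)]
        exact col j
      have hrest : ∑ k ∈ Finset.univ.erase j, (W k j) ^ 2 = 0 := by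
        rw [hW1] at hsplit; nlinarith
      have hz : (W i j) ^ 2 = 0 :=
        (Finset.sum_eq_zero_iff_of_nonneg (fun k _ => sq_nonneg _)).mp hrest i
          (Finset.mem_erase.mpr ⟨hij, Finset.mem_univ i⟩)
      rw [pow_eq_zero_iff (two_ne_zero)] at hz
      rw [hz, zero_mul, hSdiag i j hij]

theorem trace_maximization_characterization {n : ℕ}
    (M : Matrix (Fin n) (Fin n) ℝ)
    (Q : Matrix (Fin n) (Fin n) ℝ) (hQ : Qᵀ * Q = 1)
    (U V S : Matrix (Fin n) (Fin n) ℝ)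
    (hU : Uᵀ * U = 1) (hV : Vᵀ * V = 1)
    (hSdiag : ∀ i j, i ≠ j → S i j = 0) (hSnonneg : ∀ i, 0 ≤ S i i)
    (hSVD : M = U * S * Vᵀ) :
    ((∀ Q' : Matrix (Fin n) (Fin n) ℝ, Q'ᵀ * Q' = 1 →
        (Q'ᵀ * M).trace ≤ (Qᵀ * M).trace) ↔ (Qᵀ * M).PosSemidef) ∧
    ((U * Vᵀ)ᵀ * M).trace = S.trace ∧
    (∀ Q' : Matrix (Fin n) (Fin n) ℝ, Q'ᵀ * Q' = 1 →
        (Q'ᵀ * M).trace ≤ S.trace) := by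
  have hCT : ∀ (X : Matrix (Fin n) (Fin n) ℝ), Xᴴ = Xᵀ := fun X => by
    ext i j; simp [Matrix.conjTranspose_apply]
  have hVV : V * Vᵀ = 1 := mul_eq_one_comm.mp hV
  have hUU : U * Uᵀ = 1 := mul_eq_one_comm.mp hU
  have hQQ : Q * Qᵀ = 1 := mul_eq_one_comm.mp hQ
  -- S is PSD
  have hSeq : S = Matrix.diagonal (fun i => S i i) := by
    ext i j
    by_cases h : i = j
    · subst h; simp
    · simp [Matrix.diagonal_apply_ne _ h, hSdiag i j h]
  have hSpsd : S.PosSemidef := by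
    rw [hSeq]; exact Matrix.PosSemidef.diagonal (fun i => hSnonneg i)
  have hVSVpsd : (V * S * Vᵀ).PosSemidef := by
    have := hSpsd.mul_mul_conjTranspose_same V
    rwa [hCT] at this
  -- orthogonality of U * Vᵀ
  have hOrthUV : (U * Vᵀ)ᵀ * (U * Vᵀ) = 1 := orth_mul' hU (orth_transpose' hV)
  -- (U Vᵀ)ᵀ M = V S Vᵀ
  have hQ0M : (U * Vᵀ)ᵀ * M = V * S * Vᵀ := by
    rw [hSVD, Matrix.transpose_mul, Matrix.transpose_transpose]
    have h1 : V * Uᵀ * (U * S * Vᵀ) = V * (Uᵀ * U) * (S * Vᵀ) := by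
      simp only [Matrix.mul_assoc]
    rw [h1, hU, Matrix.mul_one, Matrix.mul_assoc]
  have htrVSV : (V * S * Vᵀ).trace = S.trace := by
    rw [Matrix.trace_mul_cycle, hV, Matrix.one_mul]
  -- Part 2
  have part2 : ((U * Vᵀ)ᵀ * M).trace = S.trace := by rw [hQ0M, htrVSV]
  -- Part 3
  have part3 : ∀ Q' : Matrix (Fin n) (Fin n) ℝ, Q'ᵀ * Q' = 1 →
      (Q'ᵀ * M).trace ≤ S.trace := by
    intro Q' hQ'
    have hRorth : (Q'ᵀ * (U * Vᵀ))ᵀ * (Q'ᵀ * (U * Vᵀ)) = 1 :=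
      orth_mul' (orth_transpose' hQ') hOrthUV
    have hdecomp : Q'ᵀ * M = (Q'ᵀ * (U * Vᵀ)) * (V * S * Vᵀ) := by
      rw [hSVD]
      have h1 : Q'ᵀ * (U * Vᵀ) * (V * S * Vᵀ) = Q'ᵀ * (U * ((Vᵀ * V) * (S * Vᵀ))) := by
        simp only [Matrix.mul_assoc]
      rw [h1, hV, Matrix.one_mul]
      simp only [Matrix.mul_assoc]
    calc (Q'ᵀ * M).trace = ((Q'ᵀ * (U * Vᵀ)) * (V * S * Vᵀ)).trace := by rw [hdecomp]
      _ ≤ (V * S * Vᵀ).trace := trace_orth_mul_psd' _ _ hRorth hVSVpsd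
      _ = S.trace := htrVSV
  refine ⟨⟨?_, ?_⟩, part2, part3⟩
  · -- maximizer → PSD
    intro hmax
    have heq : (Qᵀ * M).trace = S.trace := by
      refine le_antisymm (part3 Q hQ) ?_
      have := hmax (U * Vᵀ) hOrthUV
      rw [part2] at this; exact this
    set W := Vᵀ * Qᵀ * U with hWdef
    have hWorth : Wᵀ * W = 1 :=
      orth_mul' (orth_mul' (orth_transpose' hV) (orth_transpose' hQ)) hU
    have hkey : Qᵀ * M = V * (W * S) * Vᵀ := by
      rw [hSVD, hWdef]
      have h1 : V * (Vᵀ * Qᵀ * U * S) * Vᵀ = (V * Vᵀ) * (Qᵀ * (U * S * Vᵀ)) := by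
        simp only [Matrix.mul_assoc]
      rw [h1, hVV, Matrix.one_mul]
    have htrW : (W * S).trace = S.trace := by
      have h1 : (V * (W * S) * Vᵀ).trace = (W * S).trace := by
        rw [Matrix.trace_mul_cycle, hV, Matrix.one_mul]
      rw [hkey, h1] at heq; exact heq
    have hWS : W * S = S := orth_trace_eq_imp' W S hWorth hSdiag hSnonneg htrW
    rw [hkey, hWS]
    exact hVSVpsd
  · -- PSD → maximizer
    intro hpsd Q' hQ'
    have hMfac : M = Q * (Qᵀ * M) := by
      rw [← Matrix.mul_assoc, hQQ, Matrix.one_mul]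
    have hRorth : (Q'ᵀ * Q)ᵀ * (Q'ᵀ * Q) = 1 := orth_mul' (orth_transpose' hQ') hQ
    have h2 : Q'ᵀ * M = (Q'ᵀ * Q) * (Qᵀ * M) := by
      conv_lhs => rw [hMfac]
      rw [Matrix.mul_assoc]
    rw [h2]
    exact trace_orth_mul_psd' _ _ hRorth hpsd
end

section
/- The best approximation of W by a sum of r Kronecker products, min_{A_i,B_i} ‖W − Σ_{i=1}^r A_i ⊗ B_i‖_F, equals the error of the best rank-r approximation of the rearranged matrix R(W): it equals sqrt(Σ_{k>r} σ_k²), where σ_k are the singular values of R(W). -/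
open Matrix Kronecker

def rearrange {m n p q : ℕ} (W : Matrix (Fin m × Fin p) (Fin n × Fin q) ℝ) :
    Matrix (Fin m × Fin n) (Fin p × Fin q) ℝ :=
  fun e f => W (e.1, f.1) (e.2, f.2)

open Finset
open scoped RealInnerProductSpace


noncomputable def frobSq {m n : Type*} [Fintype m] [Fintype n] (M : Matrix m n ℝ) : ℝ :=
  ∑ i, ∑ j, (M i j) ^ 2

lemma frobSq_nonneg {m n : Type*} [Fintype m] [Fintype n] (M : Matrix m n ℝ) : 0 ≤ frobSq M :=
  Finset.sum_nonneg fun _ _ => Finset.sum_nonneg fun _ _ => sq_nonneg _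

lemma frobSq_eq_trace {m n : Type*} [Fintype m] [Fintype n] (M : Matrix m n ℝ) :
    frobSq M = Matrix.trace (M * Mᵀ) := by
  simp [frobSq, Matrix.trace, Matrix.diag, Matrix.mul_apply, sq]

lemma frobSq_conj {m n : Type*} [Fintype m] [Fintype n] [DecidableEq m] [DecidableEq n]
    (P : Matrix m m ℝ) (Q : Matrix n n ℝ) (hP : Pᵀ * P = 1) (hQ : Qᵀ * Q = 1)
    (M : Matrix m n ℝ) : frobSq (Pᵀ * M * Q) = frobSq M := by
  have hP' : P * Pᵀ = 1 := (mul_eq_one_comm).mp hP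
  have hQ' : Q * Qᵀ = 1 := (mul_eq_one_comm).mp hQ
  rw [frobSq_eq_trace, frobSq_eq_trace]
  have : (Pᵀ * M * Q) * (Pᵀ * M * Q)ᵀ = Pᵀ * (M * Mᵀ) * P := by
    simp [Matrix.transpose_mul, Matrix.mul_assoc]
    rw [← Matrix.mul_assoc Q Qᵀ, hQ']
    simp [Matrix.mul_assoc]
  rw [this, Matrix.trace_mul_comm]
  rw [← Matrix.mul_assoc, hP', Matrix.one_mul]

variable {N r : ℕ}


lemma arith_core {N B r : ℕ} (σ : ℕ → ℝ) (hA : Antitone σ) (h0 : ∀ k, 0 ≤ σ k)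
    (τ : ℕ → ℝ) (h0τ : ∀ k, 0 ≤ τ k) (h1τ : ∀ k, τ k ≤ 1)
    (hsum : ∑ k ∈ range N, τ k ≤ (r : ℝ)) :
    ∑ k ∈ Ico r (min N B), σ k ^ 2 ≤ ∑ k ∈ range (min N B), σ k ^ 2 * (1 - τ k) := by
  set m' := min N B with hm'
  have hm'N : m' ≤ N := min_le_left _ _
  have hsplit : ∑ k ∈ range m', σ k ^ 2 * (1 - τ k)
      = ∑ k ∈ range m', σ k ^ 2 - ∑ k ∈ range m', σ k ^ 2 * τ k := by
    rw [← Finset.sum_sub_distrib]; apply Finset.sum_congr rfl; intros; ring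
  rw [hsplit, le_sub_iff_add_le]
  by_cases hr : m' ≤ r
  · have : Ico r m' = ∅ := Ico_eq_empty (by omega)
    rw [this, Finset.sum_empty, zero_add]
    apply Finset.sum_le_sum; intro k _
    calc σ k ^ 2 * τ k ≤ σ k ^ 2 * 1 :=
          mul_le_mul_of_nonneg_left (h1τ k) (sq_nonneg _)
      _ = σ k ^ 2 := mul_one _
  · push_neg at hr
    have hsplit2 : ∑ k ∈ range r, σ k ^ 2 + ∑ k ∈ Ico r m', σ k ^ 2
        = ∑ k ∈ range m', σ k ^ 2 := Finset.sum_range_add_sum_Ico _ hr.le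
    rw [← hsplit2, add_comm (∑ k ∈ Ico r m', σ k ^ 2), add_le_add_iff_right]
    -- goal: ∑_{range m'} σ²τ ≤ ∑_{range r} σ²
    have hstep1 : ∑ k ∈ range m', σ k ^ 2 * τ k
        = ∑ k ∈ range r, σ k ^ 2 * τ k + ∑ k ∈ Ico r m', σ k ^ 2 * τ k :=
      (Finset.sum_range_add_sum_Ico _ hr.le).symm
    have hstep2 : ∑ k ∈ Ico r m', σ k ^ 2 * τ k ≤ σ r ^ 2 * ∑ k ∈ Ico r m', τ k := by
      rw [Finset.mul_sum]
      apply Finset.sum_le_sum; intro k hk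
      have hrk : r ≤ k := (Finset.mem_Ico.mp hk).1
      exact mul_le_mul_of_nonneg_right
        (pow_le_pow_left₀ (h0 k) (hA hrk) 2) (h0τ k)
    have hstep3 : ∑ k ∈ Ico r m', τ k ≤ (r : ℝ) - ∑ k ∈ range r, τ k := by
      have h1 : ∑ k ∈ Ico r m', τ k ≤ ∑ k ∈ Ico r N, τ k := by
        apply Finset.sum_le_sum_of_subset_of_nonneg
        · exact Finset.Ico_subset_Ico le_rfl hm'N
        · intro k _ _; exact h0τ k
      have h2 : ∑ k ∈ range r, τ k + ∑ k ∈ Ico r N, τ k = ∑ k ∈ range N, τ k :=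
        Finset.sum_range_add_sum_Ico _ (by omega)
      linarith
    have hstep4 : ∑ k ∈ range r, σ k ^ 2 * τ k + σ r ^ 2 * ((r : ℝ) - ∑ k ∈ range r, τ k)
        ≤ ∑ k ∈ range r, σ k ^ 2 := by
      have heq : σ r ^ 2 * ((r : ℝ) - ∑ k ∈ range r, τ k)
          = ∑ k ∈ range r, σ r ^ 2 * (1 - τ k) := by
        simp only [mul_sub, mul_one, Finset.sum_sub_distrib, ← Finset.mul_sum,
          Finset.sum_const, Finset.card_range, nsmul_eq_mul]
        ring
      rw [heq, ← Finset.sum_add_distrib]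
      apply Finset.sum_le_sum; intro k hk
      have hk' : k ≤ r := (Finset.mem_range.mp hk).le
      have hσ : σ r ^ 2 ≤ σ k ^ 2 := pow_le_pow_left₀ (h0 r) (hA hk') 2
      nlinarith [h1τ k, h0τ k, sq_nonneg (σ k)]
    have := mul_le_mul_of_nonneg_left hstep3 (sq_nonneg (σ r))
    linarith



lemma eucl_norm_sq (x : EuclideanSpace ℝ (Fin N)) : ‖x‖ ^ 2 = ∑ a, (x a) ^ 2 := by
  rw [EuclideanSpace.norm_eq, Real.sq_sqrt (Finset.sum_nonneg fun _ _ => sq_nonneg _)]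
  simp [Real.norm_eq_abs, sq_abs]

lemma proj_facts {S : Submodule ℝ (EuclideanSpace ℝ (Fin N))}
    (u z : EuclideanSpace ℝ (Fin N)) (hz : z ∈ S) :
    ‖u - (Submodule.orthogonalProjection S u : EuclideanSpace ℝ (Fin N))‖ ^ 2
      + ‖(Submodule.orthogonalProjection S u : EuclideanSpace ℝ (Fin N)) - z‖ ^ 2 = ‖u - z‖ ^ 2 := by
  set P := (Submodule.orthogonalProjection S u : EuclideanSpace ℝ (Fin N))
  have hperp : (inner ℝ (u - P) (P - z) : ℝ) = 0 := by
    apply Submodule.starProjection_inner_eq_zero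
    exact Submodule.sub_mem S (Submodule.orthogonalProjection S u).2 hz
  have : u - z = (u - P) + (P - z) := by abel
  rw [this, norm_add_sq_real, hperp]
  ring

lemma proj_normsq_eq_sum {S : Submodule ℝ (EuclideanSpace ℝ (Fin N))}
    (u : EuclideanSpace ℝ (Fin N)) :
    ‖(Submodule.orthogonalProjection S u : EuclideanSpace ℝ (Fin N))‖ ^ 2
      = ∑ j, (inner ℝ ((stdOrthonormalBasis ℝ S j : EuclideanSpace ℝ (Fin N))) u : ℝ) ^ 2 := by
  set w := stdOrthonormalBasis ℝ S
  set Pu := Submodule.orthogonalProjection S u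
  have h1 : ‖(Pu : EuclideanSpace ℝ (Fin N))‖ = ‖Pu‖ := rfl
  have h2 : ‖Pu‖ = ‖w.repr Pu‖ := (w.repr.norm_map Pu).symm
  have h3 : ‖w.repr Pu‖ ^ 2 = ∑ j, (w.repr Pu j) ^ 2 := eucl_norm_sq _
  rw [h1, h2, h3]
  apply Finset.sum_congr rfl
  intro j _
  congr 1
  rw [w.repr_apply_apply]
  have hco : (inner ℝ (w j) Pu : ℝ)
      = (inner ℝ ((w j : EuclideanSpace ℝ (Fin N))) (Pu : EuclideanSpace ℝ (Fin N)) : ℝ) := rfl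
  rw [hco]
  have hz : (inner ℝ ((w j : EuclideanSpace ℝ (Fin N))) (u - (Pu : EuclideanSpace ℝ (Fin N))) : ℝ) = 0 := by
    rw [real_inner_comm]
    exact Submodule.starProjection_inner_eq_zero u _ (w j).2
  rw [inner_sub_right] at hz
  linarith

-- t a := ‖P e_a‖², basic facts
section Core

lemma core_lb {N B r : ℕ} (σ : ℕ → ℝ) (hA : Antitone σ) (h0 : ∀ k, 0 ≤ σ k)
    (c : Fin r → EuclideanSpace ℝ (Fin N)) (d : Fin r → Fin B → ℝ) :
    ∑ k ∈ Finset.Ico r (min N B), σ k ^ 2 ≤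
      ∑ b : Fin B, ∑ a : Fin N,
        ((if (a : ℕ) = (b : ℕ) then σ (a : ℕ) else 0) - ∑ i, c i a * d i b) ^ 2 := by
  classical
  set S : Submodule ℝ (EuclideanSpace ℝ (Fin N)) := Submodule.span ℝ (Set.range c) with hS
  set w := stdOrthonormalBasis ℝ S with hw
  set t : ℕ → ℝ := fun k =>
    if h : k < N then
      ‖(Submodule.orthogonalProjection S (EuclideanSpace.single (⟨k, h⟩ : Fin N) (1:ℝ))
        : EuclideanSpace ℝ (Fin N))‖ ^ 2
    else 0 with ht
  -- t bounds
  have ht0 : ∀ k, 0 ≤ t k := by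
    intro k; rw [ht]; dsimp only; split
    · positivity
    · exact le_rfl
  have hnorm_single : ∀ (a : Fin N), ‖EuclideanSpace.single a (1:ℝ)‖ = 1 := by
    intro a; rw [EuclideanSpace.norm_single]; norm_num
  have hproj_le : ∀ (u : EuclideanSpace ℝ (Fin N)),
      ‖(Submodule.orthogonalProjection S u : EuclideanSpace ℝ (Fin N))‖ ^ 2 ≤ ‖u‖ ^ 2 := by
    intro u
    have := proj_facts (S := S) u 0 (Submodule.zero_mem S)
    simp only [sub_zero] at this
    nlinarith [sq_nonneg ‖u - (Submodule.orthogonalProjection S u : EuclideanSpace ℝ (Fin N))‖]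
  have ht1 : ∀ k, t k ≤ 1 := by
    intro k; rw [ht]; dsimp only; split
    · rename_i h
      calc _ ≤ ‖EuclideanSpace.single (⟨k, h⟩ : Fin N) (1:ℝ)‖ ^ 2 := hproj_le _
        _ = 1 := by rw [hnorm_single]; norm_num
    · norm_num
  -- trace bound: ∑_{k<N} t k ≤ r
  have htsum : ∑ k ∈ Finset.range N, t k ≤ (r : ℝ) := by
    have hrw : ∑ k ∈ Finset.range N, t k = ∑ a : Fin N,
        ‖(Submodule.orthogonalProjection S (EuclideanSpace.single a (1:ℝ))
          : EuclideanSpace ℝ (Fin N))‖ ^ 2 := by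
      rw [Finset.sum_range fun k => t k]
      apply Finset.sum_congr rfl
      intro a _
      rw [ht]; dsimp only
      rw [dif_pos a.2]
    rw [hrw]
    have hswap : ∑ a : Fin N, ‖(Submodule.orthogonalProjection S (EuclideanSpace.single a (1:ℝ))
          : EuclideanSpace ℝ (Fin N))‖ ^ 2
        = ∑ j, ∑ a : Fin N,
            (inner ℝ ((w j : EuclideanSpace ℝ (Fin N))) (EuclideanSpace.single a (1:ℝ)) : ℝ) ^ 2 := by
      rw [Finset.sum_comm]
      apply Finset.sum_congr rfl
      intro a _
      exact proj_normsq_eq_sum _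
    rw [hswap]
    have hinner : ∀ j (a : Fin N),
        (inner ℝ ((w j : EuclideanSpace ℝ (Fin N))) (EuclideanSpace.single a (1:ℝ)) : ℝ)
          = (w j : EuclideanSpace ℝ (Fin N)) a := by
      intro j a
      rw [EuclideanSpace.inner_single_right]
      simp
    have hnormw : ∀ j, ∑ a : Fin N, ((w j : EuclideanSpace ℝ (Fin N)) a) ^ 2 = 1 := by
      intro j
      have h1 : ‖(w j : EuclideanSpace ℝ (Fin N))‖ = 1 := by
        have := w.orthonormal.1 j
        exact this
      have := eucl_norm_sq ((w j : EuclideanSpace ℝ (Fin N)))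
      rw [h1] at this
      rw [← this]; norm_num
    calc ∑ j, ∑ a : Fin N,
          (inner ℝ ((w j : EuclideanSpace ℝ (Fin N))) (EuclideanSpace.single a (1:ℝ)) : ℝ) ^ 2
        = ∑ j : Fin (Module.finrank ℝ S), (1:ℝ) := by
          apply Finset.sum_congr rfl
          intro j _
          rw [show ∑ a : Fin N,
              (inner ℝ ((w j : EuclideanSpace ℝ (Fin N))) (EuclideanSpace.single a (1:ℝ)) : ℝ) ^ 2
              = ∑ a : Fin N, ((w j : EuclideanSpace ℝ (Fin N)) a) ^ 2 from
            Finset.sum_congr rfl fun a _ => by rw [hinner]]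
          exact hnormw j
      _ = (Module.finrank ℝ S : ℝ) := by simp
      _ ≤ (r : ℝ) := by
          have : Module.finrank ℝ S ≤ r := by
            have h1 : Module.finrank ℝ S ≤ (Set.range c).toFinset.card :=
              finrank_span_le_card (Set.range c)
            have h2 : (Set.range c).toFinset.card ≤ Fintype.card (Fin r) :=
              (Set.toFinset_range c) ▸ (Finset.card_image_le.trans (by simp))
            simpa using h1.trans h2
          exact_mod_cast this
  -- columns
  set v : Fin B → EuclideanSpace ℝ (Fin N) := fun b =>
    WithLp.toLp 2 (fun a : Fin N => if (a : ℕ) = (b : ℕ) then σ (a : ℕ) else 0) with hv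
  set z : Fin B → EuclideanSpace ℝ (Fin N) := fun b =>
    WithLp.toLp 2 (fun a : Fin N => ∑ i, c i a * d i b) with hzdef
  have hzS : ∀ b, z b ∈ S := by
    intro b
    have : z b = ∑ i, d i b • c i := by
      ext a
      have : (∑ i, d i b • c i) a = ∑ i, (d i b • c i) a := by
        rw [WithLp.ofLp_sum]; exact Finset.sum_apply a Finset.univ _
      rw [this]
      simp only [PiLp.smul_apply, smul_eq_mul]
      exact (Finset.sum_congr rfl fun i _ => mul_comm _ _ : ∑ i, c i a * d i b = _)
    rw [this]
    exact Submodule.sum_mem S fun i _ =>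
      Submodule.smul_mem S _ (Submodule.subset_span (Set.mem_range_self i))
  have hcol : ∀ b : Fin B, ∑ a : Fin N,
      ((if (a : ℕ) = (b : ℕ) then σ (a : ℕ) else 0) - ∑ i, c i a * d i b) ^ 2
      = ‖v b - z b‖ ^ 2 := by
    intro b
    rw [eucl_norm_sq]
    apply Finset.sum_congr rfl
    intro a _
    rw [PiLp.sub_apply]
  have hcolLB : ∀ b : Fin B, (if h : (b : ℕ) < N then σ (b : ℕ) ^ 2 * (1 - t b) else 0)
      ≤ ‖v b - z b‖ ^ 2 := by
    intro b
    split
    · rename_i hb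
      set u : EuclideanSpace ℝ (Fin N) := EuclideanSpace.single (⟨(b : ℕ), hb⟩ : Fin N) (1:ℝ)
      have hvb : v b = σ (b : ℕ) • u := by
        ext a
        have hrhs : (σ (b : ℕ) • u) a = σ (b : ℕ) * (if a = (⟨(b : ℕ), hb⟩ : Fin N) then 1 else 0) := by
          rw [PiLp.smul_apply, smul_eq_mul]
          congr 1
          exact EuclideanSpace.single_apply _ _ _
        have hlhs : v b a = if (a : ℕ) = (b : ℕ) then σ (a : ℕ) else 0 := rfl
        rw [hlhs, hrhs]
        by_cases hab : (a : ℕ) = (b : ℕ)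
        · rw [if_pos hab, if_pos (Fin.ext hab), hab, mul_one]
        · rw [if_neg hab, if_neg (fun hcon => hab (by rw [hcon])), mul_zero]
      have h1 := proj_facts (S := S) (v b) (z b) (hzS b)
      have h2 := proj_facts (S := S) (v b) 0 (Submodule.zero_mem S)
      simp only [sub_zero] at h2
      have hPv : ‖(Submodule.orthogonalProjection S (v b) : EuclideanSpace ℝ (Fin N))‖ ^ 2
          = σ (b : ℕ) ^ 2 * t (b : ℕ) := by
        rw [hvb, _root_.map_smul]
        have : ((σ (b : ℕ) • Submodule.orthogonalProjection S u : S) : EuclideanSpace ℝ (Fin N))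
            = σ (b : ℕ) • (Submodule.orthogonalProjection S u : EuclideanSpace ℝ (Fin N)) := rfl
        rw [this, norm_smul]
        rw [ht]; dsimp only; rw [dif_pos hb]
        simp [mul_pow, sq_abs, Real.norm_eq_abs]
        exact Or.inl rfl
      have hvnorm : ‖v b‖ ^ 2 = σ (b : ℕ) ^ 2 := by
        rw [hvb, norm_smul, hnorm_single]
        simp [sq_abs, Real.norm_eq_abs]
      nlinarith [sq_nonneg ‖(Submodule.orthogonalProjection S (v b) : EuclideanSpace ℝ (Fin N)) - z b‖]
    · positivity
  -- assemble
  have hmain : ∑ k ∈ Finset.range (min N B), σ k ^ 2 * (1 - t k)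
      ≤ ∑ b : Fin B, ∑ a : Fin N,
        ((if (a : ℕ) = (b : ℕ) then σ (a : ℕ) else 0) - ∑ i, c i a * d i b) ^ 2 := by
    have h1 : ∑ b : Fin B, (if h : (b : ℕ) < N then σ (b : ℕ) ^ 2 * (1 - t (b : ℕ)) else 0)
        ≤ ∑ b : Fin B, ∑ a : Fin N,
          ((if (a : ℕ) = (b : ℕ) then σ (a : ℕ) else 0) - ∑ i, c i a * d i b) ^ 2 := by
      apply Finset.sum_le_sum
      intro b _
      rw [hcol b]
      exact hcolLB b
    refine le_trans (le_of_eq ?_) h1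
    rw [← Finset.sum_range (fun k => if h : k < N then σ k ^ 2 * (1 - t k) else 0)]
    apply Finset.sum_subset_zero_on_sdiff
    · exact Finset.range_subset_range.mpr (min_le_right _ _)
    · intro k hk
      simp only [Finset.mem_sdiff, Finset.mem_range] at hk
      have hkN : ¬ k < N := by
        rcases le_total N B with h | h
        · rw [min_eq_left h] at hk; omega
        · rw [min_eq_right h] at hk; omega
      rw [dif_neg hkN]
    · intro k hk
      simp only [Finset.mem_range] at hk
      have hkN : k < N := lt_of_lt_of_le hk (min_le_left _ _)
      rw [dif_pos hkN]
  exact le_trans (arith_core σ hA h0 t ht0 ht1 htsum) hmain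


end Core

lemma mul_vecMulVec_mul {m n p q : Type*} [Fintype m] [Fintype n] [Fintype p] [Fintype q]
    (P : Matrix m n ℝ) (Q : Matrix p q ℝ) (a : n → ℝ) (b : q → ℝ) :
    P * vecMulVec a b * Qᵀ = vecMulVec (P *ᵥ a) (Q *ᵥ b) := by
  ext e f
  simp only [Matrix.mul_apply, vecMulVec_apply, transpose_apply, mulVec, dotProduct]
  rw [Finset.sum_mul_sum, Finset.sum_comm]
  apply Finset.sum_congr rfl; intro t _
  rw [Finset.sum_mul]
  apply Finset.sum_congr rfl; intro s _
  ring

-- ℕ-level computation for the membership value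
lemma member_value (σ : ℕ → ℝ) (mn pq r : ℕ) :
    ∑ kb ∈ range pq, ∑ ka ∈ range mn,
      ((if ka = kb then σ ka else 0)
        - ∑ i ∈ range r, (if ka = i then σ i else 0) * (if kb = i then (1:ℝ) else 0)) ^ 2
      = ∑ k ∈ Ico r (min mn pq), σ k ^ 2 := by
  have hinner : ∀ ka kb, (∑ i ∈ range r, (if ka = i then σ i else 0) * (if kb = i then (1:ℝ) else 0))
      = if ka = kb ∧ ka < r then σ ka else 0 := by
    intro ka kb
    have hterm : ∀ i, (if ka = i then σ i else 0) * (if kb = i then (1:ℝ) else 0)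
        = if i = ka then (if ka = kb then σ ka else 0) else 0 := by
      intro i
      by_cases h3 : i = ka
      · subst h3
        by_cases h2 : kb = i
        · subst h2; simp
        · simp [h2, show i ≠ kb from fun h => h2 h.symm]
      · simp [show ka ≠ i from fun h => h3 h.symm, h3]
    rw [Finset.sum_congr rfl fun i _ => hterm i, Finset.sum_ite_eq' (range r)]
    by_cases hka : ka ∈ range r
    · rw [if_pos hka]
      simp only [Finset.mem_range] at hka
      by_cases h : ka = kb
      · rw [if_pos h, if_pos ⟨h, hka⟩]
      · rw [if_neg h, if_neg (fun hc => h hc.1)]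
    · rw [if_neg hka]
      simp only [Finset.mem_range] at hka
      rw [if_neg (fun hc => hka hc.2)]
  have houter : ∀ kb, ∑ ka ∈ range mn,
      ((if ka = kb then σ ka else 0) - (if ka = kb ∧ ka < r then σ ka else 0)) ^ 2
      = if kb < mn ∧ r ≤ kb then σ kb ^ 2 else 0 := by
    intro kb
    have hterm : ∀ ka, ((if ka = kb then σ ka else 0) - (if ka = kb ∧ ka < r then σ ka else 0)) ^ 2
        = if ka = kb then (if r ≤ kb then σ kb ^ 2 else 0) else 0 := by
      intro ka
      by_cases h : ka = kb
      · subst h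
        by_cases h2 : ka < r
        · simp [h2, Nat.not_le.mpr h2]
        · simp [h2, Nat.le_of_not_lt h2]
      · simp [h, fun hc : ka = kb ∧ ka < r => h hc.1]
    rw [Finset.sum_congr rfl fun ka _ => hterm ka, Finset.sum_ite_eq' (range mn)]
    by_cases hkb : kb ∈ range mn
    · rw [if_pos hkb]
      simp only [Finset.mem_range] at hkb
      by_cases h : r ≤ kb
      · rw [if_pos h, if_pos ⟨hkb, h⟩]
      · rw [if_neg h, if_neg (fun hc => h hc.2)]
    · rw [if_neg hkb]
      simp only [Finset.mem_range] at hkb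
      rw [if_neg (fun hc => hkb hc.1)]
  calc ∑ kb ∈ range pq, ∑ ka ∈ range mn,
        ((if ka = kb then σ ka else 0)
          - ∑ i ∈ range r, (if ka = i then σ i else 0) * (if kb = i then (1:ℝ) else 0)) ^ 2
      = ∑ kb ∈ range pq, (if kb < mn ∧ r ≤ kb then σ kb ^ 2 else 0) := by
        apply Finset.sum_congr rfl; intro kb _
        rw [← houter kb]
        apply Finset.sum_congr rfl; intro ka _
        rw [hinner]
    _ = ∑ k ∈ Ico r (min mn pq), σ k ^ 2 := by
        rw [← Finset.sum_filter]
        apply Finset.sum_congr _ (fun _ _ => rfl)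
        ext k
        simp only [Finset.mem_filter, Finset.mem_range, Finset.mem_Ico]
        omega

lemma frobSq_rearrange {m n p q : ℕ} (X : Matrix (Fin m × Fin p) (Fin n × Fin q) ℝ) :
    frobSq (rearrange X) = frobSq X := by
  simp only [frobSq, rearrange]
  simp_rw [Fintype.sum_prod_type]
  apply Finset.sum_congr rfl; intro i _
  exact Finset.sum_comm

lemma rearrange_sub {m n p q : ℕ} (X Y : Matrix (Fin m × Fin p) (Fin n × Fin q) ℝ) :
    rearrange (X - Y) = rearrange X - rearrange Y := rfl

lemma rearrange_sum {m n p q r : ℕ} (K : Fin r → Matrix (Fin m × Fin p) (Fin n × Fin q) ℝ) :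
    rearrange (∑ i, K i) = ∑ i, rearrange (K i) := by
  ext e f
  simp only [rearrange, Matrix.sum_apply]

lemma rearrange_kron {m n p q : ℕ} (A : Matrix (Fin m) (Fin n) ℝ) (B : Matrix (Fin p) (Fin q) ℝ) :
    rearrange (A ⊗ₖ B) = vecMulVec (fun e : Fin m × Fin n => A e.1 e.2)
      (fun f : Fin p × Fin q => B f.1 f.2) := by
  ext e f
  simp [rearrange, Matrix.kroneckerMap_apply, vecMulVec_apply]

lemma frobSq_to_double {m n p q r : ℕ} (σ : ℕ → ℝ)
    (c : Fin r → (Fin m × Fin n) → ℝ) (d : Fin r → (Fin p × Fin q) → ℝ) :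
    frobSq ((Matrix.of fun (e : Fin m × Fin n) (f : Fin p × Fin q) =>
        if ((finProdFinEquiv e : ℕ) = (finProdFinEquiv f : ℕ)) then σ (finProdFinEquiv e) else 0)
      - ∑ i, vecMulVec (c i) (d i)) =
    ∑ b : Fin (p * q), ∑ a : Fin (m * n),
      ((if (a : ℕ) = (b : ℕ) then σ (a : ℕ) else 0)
        - ∑ i, c i (finProdFinEquiv.symm a) * d i (finProdFinEquiv.symm b)) ^ 2 := by
  rw [frobSq, Finset.sum_comm]
  apply Fintype.sum_equiv finProdFinEquiv
  intro f
  apply Fintype.sum_equiv finProdFinEquiv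
  intro e
  rw [Equiv.symm_apply_apply, Equiv.symm_apply_apply]
  congr 1
  simp only [Matrix.sub_apply, Matrix.of_apply, Matrix.sum_apply, vecMulVec_apply]


lemma double_fin_to_range (MN PQ : ℕ) (F : ℕ → ℕ → ℝ) :
    ∑ b : Fin PQ, ∑ a : Fin MN, F (a : ℕ) (b : ℕ)
      = ∑ kb ∈ Finset.range PQ, ∑ ka ∈ Finset.range MN, F ka kb := by
  rw [Finset.sum_range]
  apply Finset.sum_congr rfl
  intro b _
  rw [Finset.sum_range]

theorem best_kronecker_sum_approximation {m n p q r : ℕ}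
    (W : Matrix (Fin m × Fin p) (Fin n × Fin q) ℝ)
    (σ : ℕ → ℝ) (hσ_anti : Antitone σ) (hσ_nonneg : ∀ k, 0 ≤ σ k)
    (U : Matrix (Fin m × Fin n) (Fin m × Fin n) ℝ)
    (V : Matrix (Fin p × Fin q) (Fin p × Fin q) ℝ)
    (hU : Uᵀ * U = 1) (hV : Vᵀ * V = 1)
    (hSVD : rearrange W =
      U * (Matrix.of fun (e : Fin m × Fin n) (f : Fin p × Fin q) =>
        if ((finProdFinEquiv e : ℕ) = (finProdFinEquiv f : ℕ))
        then σ (finProdFinEquiv e) else 0) * Vᵀ) :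
    IsLeast
      { err : ℝ | ∃ (A : Fin r → Matrix (Fin m) (Fin n) ℝ)
          (B : Fin r → Matrix (Fin p) (Fin q) ℝ),
          err = frob (W - ∑ i, A i ⊗ₖ B i) }
      (Real.sqrt (∑ k ∈ Finset.Ico r (min (m * n) (p * q)), σ k ^ 2)) := by
  classical
  have hUU : U * Uᵀ = 1 := mul_eq_one_comm.mp hU
  have hVV : V * Vᵀ = 1 := mul_eq_one_comm.mp hV
  set Smat : Matrix (Fin m × Fin n) (Fin p × Fin q) ℝ :=
    Matrix.of fun (e : Fin m × Fin n) (f : Fin p × Fin q) =>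
      if ((finProdFinEquiv e : ℕ) = (finProdFinEquiv f : ℕ))
      then σ (finProdFinEquiv e) else 0 with hSdef
  have key : ∀ (A : Fin r → Matrix (Fin m) (Fin n) ℝ) (B : Fin r → Matrix (Fin p) (Fin q) ℝ),
      frobSq (W - ∑ i, A i ⊗ₖ B i)
        = frobSq (Smat - ∑ i, vecMulVec (Uᵀ *ᵥ (fun e : Fin m × Fin n => A i e.1 e.2))
            (Vᵀ *ᵥ (fun f : Fin p × Fin q => B i f.1 f.2))) := by
    intro A B
    rw [← frobSq_rearrange, rearrange_sub, rearrange_sum]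
    rw [← frobSq_conj U V hU hV]
    congr 1
    rw [Matrix.mul_sub, Matrix.sub_mul]
    congr 1
    · rw [hSVD]
      rw [show Uᵀ * (U * Smat * Vᵀ) * V = (Uᵀ * U) * Smat * (Vᵀ * V) by
        simp only [Matrix.mul_assoc]]
      rw [hU, hV, Matrix.one_mul, Matrix.mul_one]
    · rw [Matrix.mul_sum, Matrix.sum_mul]
      apply Finset.sum_congr rfl
      intro i _
      rw [rearrange_kron]
      have h := mul_vecMulVec_mul Uᵀ Vᵀ (fun e : Fin m × Fin n => A i e.1 e.2)
        (fun f : Fin p × Fin q => B i f.1 f.2)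
      rw [Matrix.transpose_transpose] at h
      rw [h]
  constructor
  · -- membership: truncated SVD
    set cm : Fin r → (Fin m × Fin n) → ℝ :=
      fun i e => if ((finProdFinEquiv e : ℕ) = (i : ℕ)) then σ (i : ℕ) else 0 with hcmdef
    set dm : Fin r → (Fin p × Fin q) → ℝ :=
      fun i f => if ((finProdFinEquiv f : ℕ) = (i : ℕ)) then (1 : ℝ) else 0 with hdmdef
    refine ⟨fun i => Matrix.of fun x y => (U *ᵥ cm i) (x, y),
            fun i => Matrix.of fun z w => (V *ᵥ dm i) (z, w), ?_⟩
    have hA : ∀ i, (fun e : Fin m × Fin n =>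
        (Matrix.of fun x y => (U *ᵥ cm i) (x, y)) e.1 e.2) = U *ᵥ cm i := by
      intro i; funext e; cases e; rfl
    have hB : ∀ i, (fun f : Fin p × Fin q =>
        (Matrix.of fun z w => (V *ᵥ dm i) (z, w)) f.1 f.2) = V *ᵥ dm i := by
      intro i; funext f; cases f; rfl
    have h1 := key (fun i => Matrix.of fun x y => (U *ᵥ cm i) (x, y))
      (fun i => Matrix.of fun z w => (V *ᵥ dm i) (z, w))
    simp only [hA, hB, Matrix.mulVec_mulVec, hU, hV, Matrix.one_mulVec] at h1
    rw [show frob (W - ∑ i, (Matrix.of fun x y => (U *ᵥ cm i) (x, y)) ⊗ₖ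
        (Matrix.of fun z w => (V *ᵥ dm i) (z, w))) = Real.sqrt (frobSq (W - ∑ i,
        (Matrix.of fun x y => (U *ᵥ cm i) (x, y)) ⊗ₖ
        (Matrix.of fun z w => (V *ᵥ dm i) (z, w)))) from rfl]
    rw [h1, frobSq_to_double]
    congr 1
    have hcm' : ∀ (i : Fin r) (a : Fin (m * n)),
        cm i (finProdFinEquiv.symm a) = if ((a : ℕ) = (i : ℕ)) then σ (i : ℕ) else 0 := by
      intro i a; rw [hcmdef]; simp only [Equiv.apply_symm_apply]
    have hdm' : ∀ (i : Fin r) (b : Fin (p * q)),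
        dm i (finProdFinEquiv.symm b) = if ((b : ℕ) = (i : ℕ)) then (1 : ℝ) else 0 := by
      intro i b; rw [hdmdef]; simp only [Equiv.apply_symm_apply]
    simp only [hcm', hdm']
    have e1 : (∑ b : Fin (p * q), ∑ a : Fin (m * n),
        ((if ((a : ℕ) = (b : ℕ)) then σ (a : ℕ) else 0)
          - ∑ i : Fin r, (if ((a : ℕ) = (i : ℕ)) then σ (i : ℕ) else 0)
              * (if ((b : ℕ) = (i : ℕ)) then (1 : ℝ) else 0)) ^ 2)
        = ∑ kb ∈ Finset.range (p * q), ∑ ka ∈ Finset.range (m * n),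
          ((if (ka = kb) then σ ka else 0)
            - ∑ i ∈ Finset.range r, (if (ka = i) then σ i else 0)
                * (if (kb = i) then (1 : ℝ) else 0)) ^ 2 := by
      rw [← double_fin_to_range (m * n) (p * q) (fun ka kb =>
        ((if (ka = kb) then σ ka else 0)
          - ∑ i ∈ Finset.range r, (if (ka = i) then σ i else 0)
              * (if (kb = i) then (1 : ℝ) else 0)) ^ 2)]
      apply Finset.sum_congr rfl; intro b _
      apply Finset.sum_congr rfl; intro a _
      rw [Finset.sum_range]
    rw [e1, member_value σ (m * n) (p * q) r]
  · -- lower bound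
    rintro err ⟨A, B, hab⟩
    rw [hab]
    rw [show frob (W - ∑ i, A i ⊗ₖ B i)
        = Real.sqrt (frobSq (W - ∑ i, A i ⊗ₖ B i)) from rfl]
    apply Real.sqrt_le_sqrt
    rw [key A B, frobSq_to_double]
    exact core_lb σ hσ_anti hσ_nonneg
      (fun i => WithLp.toLp 2 (fun a => (Uᵀ *ᵥ (fun e : Fin m × Fin n => A i e.1 e.2))
        (finProdFinEquiv.symm a)))
      (fun i b => (Vᵀ *ᵥ (fun f : Fin p × Fin q => B i f.1 f.2)) (finProdFinEquiv.symm b))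
end

section
/- Let M ∈ ℝ^{N×n}, let d ≤ n, and let P = diag(I_d, 0) ∈ ℝ^{n×n}. Then min_{QᵀQ=I} ‖M Q (I − P)‖_F² = Σ_{k>d} σ_k(M)², i.e., the optimum over orthogonal Q of zeroing the last n−d columns of MQ equals the best rank-d approximation error of M, attained when the first d columns of Q are the top d right singular vectors of M. -/
open Matrix

lemma frob_sq {m n : Type*} [Fintype m] [Fintype n] (M : Matrix m n ℝ) :
    frob M ^ 2 = ∑ i, ∑ j, (M i j) ^ 2 := by
  rw [frob, Real.sq_sqrt]; positivity

lemma frob_sq_eq_trace {m n : Type*} [Fintype m] [Fintype n] (A : Matrix m n ℝ) :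
    frob A ^ 2 = ((Aᵀ * A).trace) := by
  rw [frob_sq, Matrix.trace, Finset.sum_comm]
  congr 1; ext j
  simp [Matrix.mul_apply, Matrix.diag, pow_two]

lemma frob_sq_orth_left {m n : Type*} [Fintype m] [Fintype n] [DecidableEq m]
    (U : Matrix m m ℝ) (hU : Uᵀ * U = 1) (A : Matrix m n ℝ) :
    frob (U * A) ^ 2 = frob A ^ 2 := by
  rw [frob_sq_eq_trace, frob_sq_eq_trace, Matrix.transpose_mul]
  rw [show Aᵀ * Uᵀ * (U * A) = Aᵀ * (Uᵀ * U) * A by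
    rw [Matrix.mul_assoc, Matrix.mul_assoc, Matrix.mul_assoc]]
  rw [hU, Matrix.mul_one]

lemma key_ineq (a t : ℕ → ℝ) (ha : ∀ i j, i ≤ j → a j ≤ a i) (ha0 : ∀ k, 0 ≤ a k)
    (ht0 : ∀ k, 0 ≤ t k) (ht1 : ∀ k, t k ≤ 1) (d m : ℕ)
    (hsum : (m : ℝ) - d ≤ ∑ k ∈ Finset.range m, t k) :
    ∑ k ∈ Finset.Ico d m, a k ≤ ∑ k ∈ Finset.range m, a k * t k := by
  rcases le_or_gt m d with h | hdm
  · rw [Finset.Ico_eq_empty (by omega)]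
    simp only [Finset.sum_empty]
    exact Finset.sum_nonneg fun k _ => mul_nonneg (ha0 k) (ht0 k)
  · have h1 : ∑ k ∈ Finset.Ico d m, a k * (1 - t k) ≤ a d * ∑ k ∈ Finset.Ico d m, (1 - t k) := by
      rw [Finset.mul_sum]
      apply Finset.sum_le_sum
      intro k hk
      exact mul_le_mul_of_nonneg_right (ha d k (Finset.mem_Ico.mp hk).1) (by linarith [ht1 k])
    have h2 : ∑ k ∈ Finset.Ico d m, (1 - t k) ≤ ∑ k ∈ Finset.range d, t k := by
      have hc : ∑ k ∈ Finset.Ico d m, (1 : ℝ) = (m : ℝ) - d := by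
        rw [Finset.sum_const, Nat.card_Ico, nsmul_eq_mul, mul_one, Nat.cast_sub hdm.le]
      have hsplit : ∑ k ∈ Finset.range d, t k + ∑ k ∈ Finset.Ico d m, t k
          = ∑ k ∈ Finset.range m, t k := by
        rw [Finset.range_eq_Ico, Finset.range_eq_Ico]
        exact Finset.sum_Ico_consecutive _ (Nat.zero_le d) hdm.le
      rw [Finset.sum_sub_distrib, hc]
      linarith
    have h3 : a d * ∑ k ∈ Finset.range d, t k ≤ ∑ k ∈ Finset.range d, a k * t k := by
      rw [Finset.mul_sum]
      apply Finset.sum_le_sum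
      intro k hk
      exact mul_le_mul_of_nonneg_right (ha k d (Finset.mem_range.mp hk).le) (ht0 k)
    have h4 : a d * ∑ k ∈ Finset.Ico d m, (1 - t k) ≤ a d * ∑ k ∈ Finset.range d, t k :=
      mul_le_mul_of_nonneg_left h2 (ha0 d)
    have h5 : ∑ k ∈ Finset.Ico d m, a k - ∑ k ∈ Finset.Ico d m, a k * t k
        = ∑ k ∈ Finset.Ico d m, a k * (1 - t k) := by
      rw [← Finset.sum_sub_distrib]
      exact Finset.sum_congr rfl fun k _ => by ring
    have h6 : ∑ k ∈ Finset.range d, a k * t k + ∑ k ∈ Finset.Ico d m, a k * t k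
        = ∑ k ∈ Finset.range m, a k * t k := by
      rw [Finset.range_eq_Ico, Finset.range_eq_Ico]
      exact Finset.sum_Ico_consecutive _ (Nat.zero_le d) hdm.le
    linarith

noncomputable def We {n : ℕ} (W : Matrix (Fin n) (Fin n) ℝ) (i j : ℕ) : ℝ :=
  if hi : i < n then if hj : j < n then W ⟨i, hi⟩ ⟨j, hj⟩ else 0 else 0

lemma We_col_norm {n : ℕ} (W : Matrix (Fin n) (Fin n) ℝ) (hW : Wᵀ * W = 1)
    (j : ℕ) (hj : j < n) : ∑ i ∈ Finset.range n, (We W i j) ^ 2 = 1 := by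
  rw [← Fin.sum_univ_eq_sum_range]
  have h0 : ∀ i : Fin n, (We W (i : ℕ) j) ^ 2 = W i ⟨j, hj⟩ * W i ⟨j, hj⟩ := by
    intro i; rw [show (We W (i : ℕ) j) = W i ⟨j, hj⟩ by simp [We, i.isLt, hj], pow_two]
  rw [Finset.sum_congr rfl fun i _ => h0 i]
  have h1 : (Wᵀ * W) ⟨j, hj⟩ ⟨j, hj⟩ = ∑ i : Fin n, W i ⟨j, hj⟩ * W i ⟨j, hj⟩ := by
    rw [Matrix.mul_apply]; simp [Matrix.transpose_apply]
  rw [← h1, hW, Matrix.one_apply_eq]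

lemma We_row_norm_le {n : ℕ} (W : Matrix (Fin n) (Fin n) ℝ) (hW : W * Wᵀ = 1)
    (d k : ℕ) : ∑ j ∈ Finset.Ico d n, (We W k j) ^ 2 ≤ 1 := by
  by_cases hk : k < n
  · have h1 : ∑ j ∈ Finset.Ico d n, (We W k j) ^ 2 ≤ ∑ j ∈ Finset.range n, (We W k j) ^ 2 := by
      apply Finset.sum_le_sum_of_subset_of_nonneg
      · intro x hx; simp only [Finset.mem_Ico] at hx; exact Finset.mem_range.mpr hx.2
      · intro x _ _; positivity
    have h2 : ∑ j ∈ Finset.range n, (We W k j) ^ 2 = 1 := by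
      rw [← Fin.sum_univ_eq_sum_range]
      have h0 : ∀ j : Fin n, (We W k (j : ℕ)) ^ 2 = W ⟨k, hk⟩ j * W ⟨k, hk⟩ j := by
        intro j; rw [show (We W k (j : ℕ)) = W ⟨k, hk⟩ j by simp [We, j.isLt, hk], pow_two]
      rw [Finset.sum_congr rfl fun j _ => h0 j]
      have h1 : (W * Wᵀ) ⟨k, hk⟩ ⟨k, hk⟩ = ∑ j : Fin n, W ⟨k, hk⟩ j * W ⟨k, hk⟩ j := by
        rw [Matrix.mul_apply]; simp [Matrix.transpose_apply]
      rw [← h1, hW, Matrix.one_apply_eq]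
    linarith
  · have h0 : ∀ j ∈ Finset.Ico d n, (We W k j) ^ 2 = 0 := by
      intro j _; simp [We, hk]
    rw [Finset.sum_congr rfl h0]; simp

lemma We_total {n d : ℕ} (hd : d ≤ n) (W : Matrix (Fin n) (Fin n) ℝ) (hW : Wᵀ * W = 1) :
    ∑ k ∈ Finset.range n, ∑ j ∈ Finset.Ico d n, (We W k j) ^ 2 = (n : ℝ) - d := by
  rw [Finset.sum_comm]
  have h0 : ∀ j ∈ Finset.Ico d n, ∑ k ∈ Finset.range n, (We W k j) ^ 2 = 1 := by
    intro j hj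
    exact We_col_norm W hW j (Finset.mem_Ico.mp hj).2
  rw [Finset.sum_congr rfl h0, Finset.sum_const, Nat.card_Ico, nsmul_eq_mul, mul_one,
    Nat.cast_sub hd]

lemma frob_comp {N n d : ℕ} (σ : ℕ → ℝ) (W : Matrix (Fin n) (Fin n) ℝ) :
    frob ((Matrix.of fun (i : Fin N) (j : Fin n) => if (i:ℕ) = (j:ℕ) then σ (j:ℕ) else 0) * W
      * (1 - Matrix.diagonal fun j : Fin n => if (j:ℕ) < d then (1:ℝ) else 0)) ^ 2
    = ∑ k ∈ Finset.range (min N n), σ k ^ 2 * ∑ j ∈ Finset.Ico d n, (We W k j) ^ 2 := by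
  have hP : (1 : Matrix (Fin n) (Fin n) ℝ)
      - Matrix.diagonal (fun j : Fin n => if (j:ℕ) < d then (1:ℝ) else 0)
      = Matrix.diagonal (fun j : Fin n => if (j:ℕ) < d then (0:ℝ) else 1) := by
    ext i j
    simp only [Matrix.sub_apply, Matrix.one_apply, Matrix.diagonal_apply]
    split_ifs <;> simp_all
  rw [frob_sq, hP]
  have hSW : ∀ (i : Fin N) (j : Fin n),
      ((Matrix.of fun (i : Fin N) (j : Fin n) => if (i:ℕ) = (j:ℕ) then σ (j:ℕ) else 0) * W) i j
      = σ (i:ℕ) * We W (i:ℕ) (j:ℕ) := by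
    intro i j
    rw [Matrix.mul_apply]
    by_cases hi : (i:ℕ) < n
    · rw [Finset.sum_eq_single_of_mem (⟨(i:ℕ), hi⟩ : Fin n) (Finset.mem_univ _)]
      · have h1 : We W (i:ℕ) (j:ℕ) = W ⟨(i:ℕ), hi⟩ j := by simp [We, hi, j.isLt]
        have h2 : ((i:ℕ) = ((⟨(i:ℕ), hi⟩ : Fin n) : ℕ)) := rfl
        rw [h1]
        simp only [Matrix.of_apply, if_pos h2, if_true]
      · intro b _ hb
        have : (i:ℕ) ≠ (b:ℕ) := fun h => hb (Fin.ext h.symm)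
        simp only [Matrix.of_apply, if_neg this, zero_mul]
    · have h0 : ∀ b : Fin n, b ∈ Finset.univ →
          (Matrix.of fun (i : Fin N) (j : Fin n) => if (i:ℕ) = (j:ℕ) then σ (j:ℕ) else 0) i b
            * W b j = 0 := by
        intro b _
        have : (i:ℕ) ≠ (b:ℕ) := fun h => hi (h ▸ b.isLt)
        simp only [Matrix.of_apply, if_neg this, zero_mul]
      rw [Finset.sum_eq_zero h0]
      simp [We, hi]
  have hinner : ∀ i : Fin N,
      (∑ j : Fin n, (((Matrix.of fun (i : Fin N) (j : Fin n) =>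
          if (i:ℕ) = (j:ℕ) then σ (j:ℕ) else 0) * W
        * Matrix.diagonal (fun j : Fin n => if (j:ℕ) < d then (0:ℝ) else 1)) i j) ^ 2)
      = σ (i:ℕ) ^ 2 * ∑ j ∈ Finset.Ico d n, (We W (i:ℕ) j) ^ 2 := by
    intro i
    have h0 : ∀ j : Fin n, (((Matrix.of fun (i : Fin N) (j : Fin n) =>
          if (i:ℕ) = (j:ℕ) then σ (j:ℕ) else 0) * W
        * Matrix.diagonal (fun j : Fin n => if (j:ℕ) < d then (0:ℝ) else 1)) i j) ^ 2
        = if ¬ (j:ℕ) < d then σ (i:ℕ) ^ 2 * (We W (i:ℕ) (j:ℕ)) ^ 2 else 0 := by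
      intro j
      rw [Matrix.mul_diagonal, hSW]
      split_ifs <;> ring
    rw [Finset.sum_congr rfl fun j _ => h0 j]
    rw [Fin.sum_univ_eq_sum_range
      (fun jn => if ¬ jn < d then σ (i:ℕ) ^ 2 * (We W (i:ℕ) jn) ^ 2 else 0) n]
    rw [← Finset.sum_filter]
    have hfil : (Finset.range n).filter (fun jn => ¬ jn < d) = Finset.Ico d n := by
      ext x; simp only [Finset.mem_filter, Finset.mem_range, Finset.mem_Ico, not_lt]
      omega
    rw [hfil, Finset.mul_sum]
  rw [Finset.sum_congr rfl fun i _ => hinner i]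
  rw [Fin.sum_univ_eq_sum_range
    (fun k => σ k ^ 2 * ∑ j ∈ Finset.Ico d n, (We W k j) ^ 2) N]
  symm
  apply Finset.sum_subset
  · intro x hx
    simp only [Finset.mem_range] at hx ⊢
    omega
  · intro x hx hnx
    simp only [Finset.mem_range] at hx hnx
    have hxn : ¬ x < n := by omega
    have h0 : ∀ j ∈ Finset.Ico d n, (We W x j) ^ 2 = 0 := by
      intro j _; simp [We, hxn]
    rw [Finset.sum_congr rfl h0]
    simp

lemma We_one_t {n d : ℕ} (k : ℕ) :
    ∑ j ∈ Finset.Ico d n, (We (1 : Matrix (Fin n) (Fin n) ℝ) k j) ^ 2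
    = if d ≤ k ∧ k < n then 1 else 0 := by
  have h0 : ∀ j ∈ Finset.Ico d n, (We (1 : Matrix (Fin n) (Fin n) ℝ) k j) ^ 2
      = if j = k then (if k < n then (1:ℝ) else 0) else 0 := by
    intro j hj
    have hjn : j < n := (Finset.mem_Ico.mp hj).2
    by_cases hk : k < n
    · by_cases hkj : j = k
      · subst hkj
        simp [We, hjn, Matrix.one_apply]
      · have : (⟨k, hk⟩ : Fin n) ≠ ⟨j, hjn⟩ := by
          simp [Fin.ext_iff]; omega
        simp [We, hk, hjn, Matrix.one_apply, this, hkj]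
    · simp [We, hk]
  rw [Finset.sum_congr rfl h0, Finset.sum_ite_eq' (Finset.Ico d n) k
    (fun _ => if k < n then (1:ℝ) else 0)]
  simp only [Finset.mem_Ico]
  split_ifs <;> simp_all

theorem slicing_best_rank_approximation {N n d : ℕ} (hd : d ≤ n)
    (M : Matrix (Fin N) (Fin n) ℝ)
    (σ : ℕ → ℝ) (hσ_anti : Antitone σ) (hσ_nonneg : ∀ k, 0 ≤ σ k)
    (U : Matrix (Fin N) (Fin N) ℝ) (V : Matrix (Fin n) (Fin n) ℝ)
    (hU : Uᵀ * U = 1) (hV : Vᵀ * V = 1)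
    (hSVD : M = U * (Matrix.of fun (i : Fin N) (j : Fin n) =>
      if (i : ℕ) = (j : ℕ) then σ (j : ℕ) else 0) * Vᵀ) :
    let P : Matrix (Fin n) (Fin n) ℝ :=
      Matrix.diagonal fun j => if (j : ℕ) < d then 1 else 0
    IsLeast
      { e : ℝ | ∃ Q : Matrix (Fin n) (Fin n) ℝ, Qᵀ * Q = 1 ∧
          e = frob (M * Q * (1 - P)) ^ 2 }
      (∑ k ∈ Finset.Ico d (min N n), σ k ^ 2) ∧
    frob (M * V * (1 - P)) ^ 2 = ∑ k ∈ Finset.Ico d (min N n), σ k ^ 2 := by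
  intro P
  have hPdef : P = Matrix.diagonal (fun j : Fin n => if (j:ℕ) < d then (1:ℝ) else 0) := rfl
  set S : Matrix (Fin N) (Fin n) ℝ :=
    Matrix.of (fun (i : Fin N) (j : Fin n) => if (i:ℕ) = (j:ℕ) then σ (j:ℕ) else 0) with hS
  have hasq : ∀ i j : ℕ, i ≤ j → σ j ^ 2 ≤ σ i ^ 2 := fun i j h =>
    pow_le_pow_left₀ (hσ_nonneg j) (hσ_anti h) 2
  -- membership value
  have hmem : frob (M * V * (1 - P)) ^ 2 = ∑ k ∈ Finset.Ico d (min N n), σ k ^ 2 := by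
    have h1 : M * V * (1 - P) = U * (S * (1 : Matrix (Fin n) (Fin n) ℝ) * (1 - P)) := by
      rw [Matrix.mul_one, hSVD, Matrix.mul_assoc (U * S) Vᵀ V, hV, Matrix.mul_one,
        Matrix.mul_assoc]
    rw [h1, frob_sq_orth_left U hU, hS, hPdef, frob_comp]
    have h2 : ∀ k ∈ Finset.range (min N n),
        σ k ^ 2 * (∑ j ∈ Finset.Ico d n, (We (1 : Matrix (Fin n) (Fin n) ℝ) k j) ^ 2)
        = if ¬ k < d then σ k ^ 2 else 0 := by
      intro k hk
      have hkn : k < n := lt_of_lt_of_le (Finset.mem_range.mp hk) (min_le_right N n)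
      rw [We_one_t]
      split_ifs <;> simp_all <;> omega
    rw [Finset.sum_congr rfl h2, ← Finset.sum_filter]
    congr 1
    ext x
    simp only [Finset.mem_filter, Finset.mem_range, Finset.mem_Ico, not_lt]
    omega
  refine ⟨⟨⟨V, hV, hmem.symm⟩, ?_⟩, hmem⟩
  rintro e ⟨Q, hQ, rfl⟩
  have hVVt : V * Vᵀ = 1 := mul_eq_one_comm.mp hV
  have hWtW : (Vᵀ * Q)ᵀ * (Vᵀ * Q) = 1 := by
    rw [Matrix.transpose_mul, Matrix.transpose_transpose]
    calc Qᵀ * V * (Vᵀ * Q) = Qᵀ * (V * Vᵀ) * Q := by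
          rw [Matrix.mul_assoc, Matrix.mul_assoc, Matrix.mul_assoc]
      _ = 1 := by rw [hVVt, Matrix.mul_one, hQ]
  have hWWt : (Vᵀ * Q) * (Vᵀ * Q)ᵀ = 1 := mul_eq_one_comm.mp hWtW
  have h1 : M * Q * (1 - P) = U * (S * (Vᵀ * Q) * (1 - P)) := by
    rw [hSVD, Matrix.mul_assoc (U * S) Vᵀ Q, Matrix.mul_assoc U S (Vᵀ * Q), Matrix.mul_assoc]
  rw [h1, frob_sq_orth_left U hU, hS, hPdef, frob_comp]
  apply key_ineq (fun k => σ k ^ 2) _ hasq (fun k => sq_nonneg (σ k))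
    (fun k => Finset.sum_nonneg fun j _ => sq_nonneg _)
    (fun k => We_row_norm_le _ hWWt d k)
  have htot := We_total hd (Vᵀ * Q) hWtW
  have hmn : min N n ≤ n := min_le_right N n
  have hsplit : ∑ k ∈ Finset.range (min N n), (∑ j ∈ Finset.Ico d n, (We (Vᵀ * Q) k j) ^ 2)
      + ∑ k ∈ Finset.Ico (min N n) n, (∑ j ∈ Finset.Ico d n, (We (Vᵀ * Q) k j) ^ 2)
      = ∑ k ∈ Finset.range n, (∑ j ∈ Finset.Ico d n, (We (Vᵀ * Q) k j) ^ 2) := by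
    rw [Finset.range_eq_Ico, Finset.range_eq_Ico]
    exact Finset.sum_Ico_consecutive _ (Nat.zero_le _) hmn
  have hbound : ∑ k ∈ Finset.Ico (min N n) n, (∑ j ∈ Finset.Ico d n, (We (Vᵀ * Q) k j) ^ 2)
      ≤ (n : ℝ) - min N n := by
    calc ∑ k ∈ Finset.Ico (min N n) n, (∑ j ∈ Finset.Ico d n, (We (Vᵀ * Q) k j) ^ 2)
        ≤ ∑ _k ∈ Finset.Ico (min N n) n, (1:ℝ) :=
          Finset.sum_le_sum fun k _ => We_row_norm_le _ hWWt d k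
      _ = (n : ℝ) - min N n := by
          rw [Finset.sum_const, Nat.card_Ico, nsmul_eq_mul, mul_one, Nat.cast_sub hmn]
  have hdm' : (d : ℝ) ≥ 0 := by positivity
  linarith
end
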